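/- arXiv:1203.2212 — 8 statements merged into one kernel-verified Lean document; each statement's English description precedes it below -/
import Mathlib

section
/- Let f : ℝ → ℝ, α > 0, and a, b ∈ ℝ. If f is α-forward integrable on [a,b] (i.e., the series ∑_{k=0}^∞ f(a+kα) and ∑_{k=0}^∞ f(b+kα) converge), then the function Δ_α[f], defined by Δ_α[f](t) := (f(t+α) − f(t))/α, is α-forward integrable on [a,b] and ∫_a^b Δ_α[f](t) Δ_α t = f(b) − f(a). -/
/-- The α-forward integral (Nörlund sum) of `f` from `a` to `b`:
`∫_a^b f(t) Δ_α t = α·∑_{k=0}^∞ f(a+kα) − α·∑_{k=0}^∞ f(b+kα)`. -/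
noncomputable def deltaInt (α : ℝ) (f : ℝ → ℝ) (a b : ℝ) : ℝ :=
  α * ∑' k : ℕ, f (a + k * α) - α * ∑' k : ℕ, f (b + k * α)

/-- `f` is α-forward integrable on `[a,b]`: both defining series converge. -/
def ForwardIntegrable (α : ℝ) (f : ℝ → ℝ) (a b : ℝ) : Prop :=
  Summable (fun k : ℕ => f (a + k * α)) ∧ Summable (fun k : ℕ => f (b + k * α))

/-!
Along the lattice `x + kα` the forward difference telescopes: since `f (x + kα) → 0`,
`∑_k Δ_α[f](x + kα) = -f(x)/α`, and the two boundary terms give `α·(-f a/α) - α·(-f b/α)`.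
-/

theorem HasSum.succ_sub {G : Type*} [AddCommGroup G] [TopologicalSpace G]
    [IsTopologicalAddGroup G] {g : ℕ → G} {s : G} (h : HasSum g s) :
    HasSum (fun n => g (n + 1) - g n) (-g 0) := by
  have hshift : HasSum (fun n => g (n + 1)) (s - g 0) := by
    simpa using (hasSum_nat_add_iff' 1).2 h
  simpa using hshift.sub h

theorem hasSum_forwardDiff_div_of_summable {f : ℝ → ℝ} {α : ℝ} (x : ℝ)
    (h : Summable fun k : ℕ => f (x + k * α)) :
    HasSum (fun k : ℕ => (f (x + k * α + α) - f (x + k * α)) / α) (-f x / α) := by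
  have hlattice (k : ℕ) : x + k * α + α = x + (k + 1 : ℕ) * α := by push_cast; ring
  simpa only [hlattice, Nat.cast_zero, zero_mul, add_zero] using
    h.hasSum.succ_sub.div_const α

theorem fundamental_theorem_forward_part2 (f : ℝ → ℝ) (α : ℝ) (hα : 0 < α) (a b : ℝ)
    (hf : ForwardIntegrable α f a b) :
    ForwardIntegrable α (fun t => (f (t + α) - f t) / α) a b ∧
    deltaInt α (fun t => (f (t + α) - f t) / α) a b = f b - f a := by
  obtain ⟨ha, hb⟩ := hf
  have hsa := hasSum_forwardDiff_div_of_summable a ha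
  have hsb := hasSum_forwardDiff_div_of_summable b hb
  refine ⟨⟨hsa.summable, hsb.summable⟩, ?_⟩
  rw [deltaInt, hsa.tsum_eq, hsb.tsum_eq]
  field_simp
  ring
end

section
/- (α-forward integration by parts) Let f, g : ℝ → ℝ, α > 0, and a, b ∈ ℝ. If the functions f·g and f·Δ_α[g] are α-forward integrable on [a,b], then the function t ↦ Δ_α[f](t)·g(t+α) is α-forward integrable on [a,b] and ∫_a^b f(t)·Δ_α[g](t) Δ_α t = f(b)·g(b) − f(a)·g(a) − ∫_a^b Δ_α[f](t)·g(t+α) Δ_α t. -/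
lemma telescope_aux (u : ℕ → ℝ) (hu : Summable u) :
    Summable (fun k => u (k+1) - u k) ∧ (∑' k : ℕ, (u (k+1) - u k)) = - u 0 := by
  have h1 : Summable (fun k => u (k+1)) := (summable_nat_add_iff 1).mpr hu
  refine ⟨h1.sub hu, ?_⟩
  rw [Summable.tsum_sub h1 hu]
  have := Summable.tsum_eq_zero_add hu
  linarith

theorem forward_integration_by_parts (f g : ℝ → ℝ) (α : ℝ) (hα : 0 < α) (a b : ℝ)
    (hfg : ForwardIntegrable α (fun t => f t * g t) a b)
    (hfdg : ForwardIntegrable α (fun t => f t * ((g (t + α) - g t) / α)) a b) :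
    ForwardIntegrable α (fun t => ((f (t + α) - f t) / α) * g (t + α)) a b ∧
    deltaInt α (fun t => f t * ((g (t + α) - g t) / α)) a b =
      f b * g b - f a * g a -
        deltaInt α (fun t => ((f (t + α) - f t) / α) * g (t + α)) a b := by
  have hα' : α ≠ 0 := hα.ne'
  have main : ∀ c : ℝ, Summable (fun k : ℕ => f (c + k * α) * g (c + k * α)) →
      Summable (fun k : ℕ => f (c + k * α) * ((g (c + k * α + α) - g (c + k * α)) / α)) →
      Summable (fun k : ℕ => ((f (c + k * α + α) - f (c + k * α)) / α) * g (c + k * α + α)) ∧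
      α * ∑' k : ℕ, ((f (c + k * α + α) - f (c + k * α)) / α) * g (c + k * α + α)
        = - (f c * g c) - α * ∑' k : ℕ, f (c + k * α) * ((g (c + k * α + α) - g (c + k * α)) / α) := by
    intro c hc hd
    set u : ℕ → ℝ := fun k => f (c + k * α) * g (c + k * α) with hu_def
    obtain ⟨hts, htv⟩ := telescope_aux u hc
    have hstep : ∀ k : ℕ, c + (↑(k+1) : ℝ) * α = c + k * α + α := by
      intro k; push_cast; ring
    have hfun : (fun k : ℕ => ((f (c + k * α + α) - f (c + k * α)) / α) * g (c + k * α + α))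
        = fun k : ℕ => (u (k+1) - u k) / α
          - f (c + k * α) * ((g (c + k * α + α) - g (c + k * α)) / α) := by
      funext k
      simp only [hu_def, hstep k]
      field_simp
      ring
    have hsum : Summable (fun k : ℕ => (u (k+1) - u k) / α
        - f (c + k * α) * ((g (c + k * α + α) - g (c + k * α)) / α)) :=
      (hts.div_const α).sub hd
    refine ⟨hfun ▸ hsum, ?_⟩
    rw [hfun, Summable.tsum_sub (hts.div_const α) hd, tsum_div_const, htv]
    have : u 0 = f c * g c := by simp [hu_def]
    rw [this]
    field_simp
  have hfga : Summable (fun k : ℕ => f (a + k * α) * g (a + k * α)) := hfg.1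
  have hfgb : Summable (fun k : ℕ => f (b + k * α) * g (b + k * α)) := hfg.2
  obtain ⟨sa, va⟩ := main a hfga hfdg.1
  obtain ⟨sb, vb⟩ := main b hfgb hfdg.2
  refine ⟨⟨sa, sb⟩, ?_⟩
  simp only [deltaInt]
  linarith
end

section
/- Let f : ℝ → ℝ, β > 0, and a, b ∈ ℝ. If f is β-backward integrable on [a,b] (i.e., the series ∑_{k=0}^∞ f(a−kβ) and ∑_{k=0}^∞ f(b−kβ) converge), then the function ∇_β[f], defined by ∇_β[f](t) := (f(t) − f(t−β))/β, is β-backward integrable on [a,b] and ∫_a^b ∇_β[f](t) ∇_β t = f(b) − f(a). -/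
/-- The β-backward integral of `f` from `a` to `b`:
`∫_a^b f(t) ∇_β t = β·∑_{k=0}^∞ f(b−kβ) − β·∑_{k=0}^∞ f(a−kβ)`. -/
noncomputable def nablaInt (β : ℝ) (f : ℝ → ℝ) (a b : ℝ) : ℝ :=
  β * ∑' k : ℕ, f (b - k * β) - β * ∑' k : ℕ, f (a - k * β)

/-- `f` is β-backward integrable on `[a,b]`: both defining series converge. -/
def BackwardIntegrable (β : ℝ) (f : ℝ → ℝ) (a b : ℝ) : Prop :=
  Summable (fun k : ℕ => f (a - k * β)) ∧ Summable (fun k : ℕ => f (b - k * β))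

lemma aux_key (f : ℝ → ℝ) (β : ℝ) (hβ : 0 < β) (c : ℝ)
    (h : Summable (fun k : ℕ => f (c - k * β))) :
    Summable (fun k : ℕ => (f (c - k * β) - f (c - k * β - β)) / β) ∧
    β * ∑' k : ℕ, (f (c - k * β) - f (c - k * β - β)) / β = f c := by
  set g : ℕ → ℝ := fun k => f (c - k * β) with hg
  have hshift : Summable (fun k : ℕ => g (k + 1)) := (summable_nat_add_iff 1).2 h
  have heq : ∀ k : ℕ, (f (c - k * β) - f (c - k * β - β)) / β = (g k - g (k + 1)) / β := by
    intro k
    have : c - (k : ℝ) * β - β = c - ((k : ℕ) + 1 : ℕ) * β := by push_cast; ring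
    simp [hg, this]
  have hs : Summable (fun k : ℕ => (g k - g (k + 1)) / β) :=
    ((h.sub hshift).div_const β)
  constructor
  · exact hs.congr fun k => (heq k).symm
  · have h1 : ∑' k : ℕ, (f (c - k * β) - f (c - k * β - β)) / β
        = ∑' k : ℕ, (g k - g (k + 1)) / β := tsum_congr heq
    have h2 : ∑' k : ℕ, (g k - g (k + 1)) / β = (∑' k : ℕ, (g k - g (k + 1))) / β :=
      tsum_div_const
    have h3 : ∑' k : ℕ, (g k - g (k + 1)) = g 0 := by
      have := Summable.tsum_sub h hshift
      rw [this]
      have h0 : ∑' k : ℕ, g k = g 0 + ∑' k : ℕ, g (k + 1) := Summable.tsum_eq_zero_add h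
      linarith
    rw [h1, h2, h3]
    field_simp
    simp [hg]

theorem fundamental_theorem_backward (f : ℝ → ℝ) (β : ℝ) (hβ : 0 < β) (a b : ℝ)
    (hf : BackwardIntegrable β f a b) :
    BackwardIntegrable β (fun t => (f t - f (t - β)) / β) a b ∧
    nablaInt β (fun t => (f t - f (t - β)) / β) a b = f b - f a := by
  obtain ⟨ha, hb⟩ := hf
  obtain ⟨ha1, ha2⟩ := aux_key f β hβ a ha
  obtain ⟨hb1, hb2⟩ := aux_key f β hβ b hb
  refine ⟨⟨ha1, hb1⟩, ?_⟩
  unfold nablaInt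
  simp only at *
  rw [hb2, ha2]
end

section
/- Let f, g : ℝ → ℝ, α > 0, β > 0, and a, b ∈ ℝ. If f is α,β-symmetric integrable on [a,b] and g is a nonnegative α,β-symmetric integrable function on [a,b], then the product f·g is α,β-symmetric integrable on [a,b]. -/
/-- `f` is α,β-symmetric integrable on `[a,b]`. -/
def SymIntegrable (α β : ℝ) (f : ℝ → ℝ) (a b : ℝ) : Prop :=
  ForwardIntegrable α f a b ∧ BackwardIntegrable β f a b

/-- The α,β-symmetric integral of `f` from `a` to `b`. -/
noncomputable def symInt (α β : ℝ) (f : ℝ → ℝ) (a b : ℝ) : ℝ :=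
  (α / (α + β)) * deltaInt α f a b + (β / (α + β)) * nablaInt β f a b

lemma summable_mul_aux {u v : ℕ → ℝ} (hu : Summable u) (hv : Summable v)
    (hv0 : ∀ k, 0 ≤ v k) : Summable (fun k => u k * v k) := by
  obtain ⟨C, hC⟩ := hu.tendsto_atTop_zero.abs.bddAbove_range
  have hC' : ∀ k, |u k| ≤ C := fun k => hC ⟨k, rfl⟩
  apply Summable.of_abs
  apply (hv.mul_left C).of_nonneg_of_le (fun k => abs_nonneg _) (fun k => ?_)
  rw [abs_mul, abs_of_nonneg (hv0 k)]
  exact mul_le_mul_of_nonneg_right (hC' k) (hv0 k)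

theorem sym_integrable_mul_of_nonneg (f g : ℝ → ℝ) (α β : ℝ) (hα : 0 < α) (hβ : 0 < β)
    (a b : ℝ) (hf : SymIntegrable α β f a b) (hg : SymIntegrable α β g a b)
    (hg0 : ∀ t : ℝ, 0 ≤ g t) :
    SymIntegrable α β (fun t => f t * g t) a b := by
  obtain ⟨⟨hf1, hf2⟩, hf3, hf4⟩ := hf
  obtain ⟨⟨hg1, hg2⟩, hg3, hg4⟩ := hg
  exact ⟨⟨summable_mul_aux hf1 hg1 (fun k => hg0 _),
          summable_mul_aux hf2 hg2 (fun k => hg0 _)⟩,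
         ⟨summable_mul_aux hf3 hg3 (fun k => hg0 _),
          summable_mul_aux hf4 hg4 (fun k => hg0 _)⟩⟩
end

section
/- Let f : ℝ → ℝ, α > 0, β > 0, p > 1, and a, b ∈ ℝ. If |f| is α,β-symmetric integrable on [a,b], then |f|^p is also α,β-symmetric integrable on [a,b]. -/
/-- Terms of a convergent series of nonnegative reals are eventually at most `1`, where
`x ^ p ≤ x` for `p ≥ 1`. -/
theorem Summable.rpow_of_one_le {ι : Type*} {g : ι → ℝ} (hg₀ : ∀ i, 0 ≤ g i) (hg : Summable g)
    {p : ℝ} (hp : 1 ≤ p) : Summable fun i => g i ^ p := by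
  refine hg.of_norm_bounded_eventually ?_
  filter_upwards [hg.tendsto_cofinite_zero.eventually (eventually_le_nhds zero_lt_one)] with i hi
  rw [Real.norm_of_nonneg (Real.rpow_nonneg (hg₀ i) p)]
  exact Real.rpow_le_self_of_le_one (hg₀ i) hi hp

section RpowOfNonneg

variable {g : ℝ → ℝ} {a b p : ℝ}

theorem ForwardIntegrable.rpow {α : ℝ} (hg₀ : ∀ t, 0 ≤ g t) (hp : 1 ≤ p)
    (hg : ForwardIntegrable α g a b) : ForwardIntegrable α (fun t => g t ^ p) a b :=
  ⟨hg.1.rpow_of_one_le (fun _ => hg₀ _) hp, hg.2.rpow_of_one_le (fun _ => hg₀ _) hp⟩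

theorem BackwardIntegrable.rpow {β : ℝ} (hg₀ : ∀ t, 0 ≤ g t) (hp : 1 ≤ p)
    (hg : BackwardIntegrable β g a b) : BackwardIntegrable β (fun t => g t ^ p) a b :=
  ⟨hg.1.rpow_of_one_le (fun _ => hg₀ _) hp, hg.2.rpow_of_one_le (fun _ => hg₀ _) hp⟩

theorem SymIntegrable.rpow {α β : ℝ} (hg₀ : ∀ t, 0 ≤ g t) (hp : 1 ≤ p)
    (hg : SymIntegrable α β g a b) : SymIntegrable α β (fun t => g t ^ p) a b :=
  ⟨hg.1.rpow hg₀ hp, hg.2.rpow hg₀ hp⟩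

end RpowOfNonneg

theorem sym_integrable_abs_rpow_general (f : ℝ → ℝ) (α β p : ℝ)
    (hp : 1 < p) (a b : ℝ) (hf : SymIntegrable α β (fun t => |f t|) a b) :
    SymIntegrable α β (fun t => |f t| ^ p) a b :=
  hf.rpow (fun t => abs_nonneg (f t)) hp.le

theorem sym_integrable_abs_rpow (f : ℝ → ℝ) (α β p : ℝ) (hα : 0 < α) (hβ : 0 < β)
    (hp : 1 < p) (a b : ℝ) (hf : SymIntegrable α β (fun t => |f t|) a b) :
    SymIntegrable α β (fun t => |f t| ^ p) a b :=
  sym_integrable_abs_rpow_general f α β p hp a b hf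
end

section
/- Let f, g : ℝ → ℝ, α > 0, β > 0, and a, b ∈ ℝ with b ∈ A := {a + kα : k ∈ ℕ₀} and a ∈ B := {b − kβ : k ∈ ℕ₀}. Suppose f and g are α,β-symmetric integrable on [a,b] and |f(t)| ≤ g(t) for all t ∈ A ∪ B. Then |∫_a^b f(t) d_{α,β}t| ≤ ∫_a^b g(t) d_{α,β}t. -/
lemma deltaInt_eq_sum (α : ℝ) (f : ℝ → ℝ) (a : ℝ) (m : ℕ)
    (hs : Summable (fun k : ℕ => f (a + k * α))) :
    deltaInt α f a (a + m * α) = α * ∑ k ∈ Finset.range m, f (a + k * α) := by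
  set F : ℕ → ℝ := fun k => f (a + k * α) with hF
  have h1 : ∑' k : ℕ, f (a + m * α + k * α) = ∑' k : ℕ, F (k + m) := by
    apply tsum_congr; intro k
    simp only [hF]
    congr 1
    push_cast
    ring
  have h2 := Summable.sum_add_tsum_nat_add m hs
  unfold deltaInt
  rw [h1]
  have : ∑' k : ℕ, f (a + k * α) = ∑' k : ℕ, F k := rfl
  rw [this]
  rw [← h2]; ring

lemma nablaInt_eq_sum (β : ℝ) (f : ℝ → ℝ) (b : ℝ) (n : ℕ)
    (hs : Summable (fun k : ℕ => f (b - k * β))) :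
    nablaInt β f (b - n * β) b = β * ∑ k ∈ Finset.range n, f (b - k * β) := by
  set F : ℕ → ℝ := fun k => f (b - k * β) with hF
  have h1 : ∑' k : ℕ, f (b - n * β - k * β) = ∑' k : ℕ, F (k + n) := by
    apply tsum_congr; intro k
    simp only [hF]
    congr 1
    push_cast
    ring
  have h2 := Summable.sum_add_tsum_nat_add n hs
  unfold nablaInt
  rw [h1]
  have : ∑' k : ℕ, f (b - k * β) = ∑' k : ℕ, F k := rfl
  rw [this]
  rw [← h2]; ring

theorem abs_sym_integral_le (f g : ℝ → ℝ) (α β : ℝ) (hα : 0 < α) (hβ : 0 < β) (a b : ℝ)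
    (hbA : ∃ k : ℕ, b = a + k * α) (haB : ∃ k : ℕ, a = b - k * β)
    (hf : SymIntegrable α β f a b) (hg : SymIntegrable α β g a b)
    (hfg : ∀ t : ℝ, (∃ k : ℕ, t = a + k * α) ∨ (∃ k : ℕ, t = b - k * β) → |f t| ≤ g t) :
    |symInt α β f a b| ≤ symInt α β g a b := by
  obtain ⟨m, hm⟩ := hbA
  obtain ⟨n, hn⟩ := haB
  -- delta part
  have hDf : deltaInt α f a b = α * ∑ k ∈ Finset.range m, f (a + k * α) := by
    rw [hm]; exact deltaInt_eq_sum α f a m hf.1.1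
  have hDg : deltaInt α g a b = α * ∑ k ∈ Finset.range m, g (a + k * α) := by
    rw [hm]; exact deltaInt_eq_sum α g a m hg.1.1
  have hNf : nablaInt β f a b = β * ∑ k ∈ Finset.range n, f (b - k * β) := by
    rw [hn]; exact nablaInt_eq_sum β f b n hf.2.2
  have hNg : nablaInt β g a b = β * ∑ k ∈ Finset.range n, g (b - k * β) := by
    rw [hn]; exact nablaInt_eq_sum β g b n hg.2.2
  have hD : |deltaInt α f a b| ≤ deltaInt α g a b := by
    rw [hDf, hDg, abs_mul, abs_of_pos hα]
    refine mul_le_mul_of_nonneg_left ?_ hα.le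
    calc |∑ k ∈ Finset.range m, f (a + k * α)| ≤ ∑ k ∈ Finset.range m, |f (a + k * α)| :=
          Finset.abs_sum_le_sum_abs _ _
      _ ≤ ∑ k ∈ Finset.range m, g (a + k * α) := by
          apply Finset.sum_le_sum
          intro k _
          exact hfg _ (Or.inl ⟨k, rfl⟩)
  have hN : |nablaInt β f a b| ≤ nablaInt β g a b := by
    rw [hNf, hNg, abs_mul, abs_of_pos hβ]
    refine mul_le_mul_of_nonneg_left ?_ hβ.le
    calc |∑ k ∈ Finset.range n, f (b - k * β)| ≤ ∑ k ∈ Finset.range n, |f (b - k * β)| :=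
          Finset.abs_sum_le_sum_abs _ _
      _ ≤ ∑ k ∈ Finset.range n, g (b - k * β) := by
          apply Finset.sum_le_sum
          intro k _
          exact hfg _ (Or.inr ⟨k, rfl⟩)
  have hc1 : 0 ≤ α / (α + β) := by positivity
  have hc2 : 0 ≤ β / (α + β) := by positivity
  unfold symInt
  calc |α / (α + β) * deltaInt α f a b + β / (α + β) * nablaInt β f a b|
      ≤ |α / (α + β) * deltaInt α f a b| + |β / (α + β) * nablaInt β f a b| := abs_add_le _ _
    _ = α / (α + β) * |deltaInt α f a b| + β / (α + β) * |nablaInt β f a b| := by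
        rw [abs_mul, abs_mul, abs_of_nonneg hc1, abs_of_nonneg hc2]
    _ ≤ α / (α + β) * deltaInt α g a b + β / (α + β) * nablaInt β g a b := by
        gcongr
end

section
/- Let f, g : ℝ → ℝ, α > 0, β > 0, and a, b ∈ ℝ with b ∈ A := {a + kα : k ∈ ℕ₀} and a ∈ B := {b − kβ : k ∈ ℕ₀}. Suppose f and g are α,β-symmetric integrable on [a,b]. Then: (1) if f(t) ≥ 0 for all t ∈ A ∪ B, then ∫_a^b f(t) d_{α,β}t ≥ 0; (2) if g(t) ≥ f(t) for all t ∈ A ∪ B, then ∫_a^b g(t) d_{α,β}t ≥ ∫_a^b f(t) d_{α,β}t. -/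
lemma deltaInt_eq_finsum (α : ℝ) (f : ℝ → ℝ) (a b : ℝ) (n : ℕ) (hb : b = a + n * α)
    (hfa : Summable (fun k : ℕ => f (a + k * α))) :
    deltaInt α f a b = α * ∑ k ∈ Finset.range n, f (a + k * α) := by
  have key : (fun k : ℕ => f (b + k * α)) = fun k : ℕ => f (a + (k + n : ℕ) * α) := by
    funext k
    congr 1
    rw [hb]
    push_cast
    ring
  have h := Summable.sum_add_tsum_nat_add (f := fun k : ℕ => f (a + k * α)) n hfa
  rw [deltaInt, key]
  rw [← h]
  ring

lemma nablaInt_eq_finsum (β : ℝ) (f : ℝ → ℝ) (a b : ℝ) (m : ℕ) (ha : a = b - m * β)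
    (hfb : Summable (fun k : ℕ => f (b - k * β))) :
    nablaInt β f a b = β * ∑ k ∈ Finset.range m, f (b - k * β) := by
  have key : (fun k : ℕ => f (a - k * β)) = fun k : ℕ => f (b - (k + m : ℕ) * β) := by
    funext k
    congr 1
    rw [ha]
    push_cast
    ring
  have h := Summable.sum_add_tsum_nat_add (f := fun k : ℕ => f (b - k * β)) m hfb
  rw [nablaInt, key]
  rw [← h]
  ring

lemma symInt_nonneg (f : ℝ → ℝ) (α β : ℝ) (hα : 0 < α) (hβ : 0 < β)
    (a b : ℝ) (hbA : ∃ k : ℕ, b = a + k * α) (haB : ∃ k : ℕ, a = b - k * β)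
    (hf : SymIntegrable α β f a b)
    (hpos : ∀ t : ℝ, (∃ k : ℕ, t = a + k * α) ∨ (∃ k : ℕ, t = b - k * β) → 0 ≤ f t) :
    0 ≤ symInt α β f a b := by
  obtain ⟨n, hn⟩ := hbA
  obtain ⟨m, hm⟩ := haB
  have hΔ : 0 ≤ deltaInt α f a b := by
    rw [deltaInt_eq_finsum α f a b n hn hf.1.1]
    apply mul_nonneg hα.le
    apply Finset.sum_nonneg
    intro k _
    exact hpos _ (Or.inl ⟨k, rfl⟩)
  have hN : 0 ≤ nablaInt β f a b := by
    rw [nablaInt_eq_finsum β f a b m hm hf.2.2]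
    apply mul_nonneg hβ.le
    apply Finset.sum_nonneg
    intro k _
    exact hpos _ (Or.inr ⟨k, rfl⟩)
  have hαβ : 0 < α + β := by linarith
  apply add_nonneg
  · exact mul_nonneg (div_nonneg hα.le hαβ.le) hΔ
  · exact mul_nonneg (div_nonneg hβ.le hαβ.le) hN

theorem sym_integral_nonneg_and_mono (f g : ℝ → ℝ) (α β : ℝ) (hα : 0 < α) (hβ : 0 < β)
    (a b : ℝ) (hbA : ∃ k : ℕ, b = a + k * α) (haB : ∃ k : ℕ, a = b - k * β)
    (hf : SymIntegrable α β f a b) (hg : SymIntegrable α β g a b) :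
    ((∀ t : ℝ, (∃ k : ℕ, t = a + k * α) ∨ (∃ k : ℕ, t = b - k * β) → 0 ≤ f t) → 0 ≤ symInt α β f a b) ∧
    ((∀ t : ℝ, (∃ k : ℕ, t = a + k * α) ∨ (∃ k : ℕ, t = b - k * β) → f t ≤ g t) →
      symInt α β f a b ≤ symInt α β g a b) := by
  constructor
  · exact fun h => symInt_nonneg f α β hα hβ a b hbA haB hf h
  · intro hle
    have hsub : SymIntegrable α β (fun t => g t - f t) a b :=
      ⟨⟨hg.1.1.sub hf.1.1, hg.1.2.sub hf.1.2⟩, ⟨hg.2.1.sub hf.2.1, hg.2.2.sub hf.2.2⟩⟩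
    have h0 : 0 ≤ symInt α β (fun t => g t - f t) a b := by
      apply symInt_nonneg _ α β hα hβ a b hbA haB hsub
      intro t ht
      simpa using hle t ht
    have hlin : symInt α β (fun t => g t - f t) a b = symInt α β g a b - symInt α β f a b := by
      simp only [symInt, deltaInt, nablaInt,
        Summable.tsum_sub hg.1.1 hf.1.1, Summable.tsum_sub hg.1.2 hf.1.2,
        Summable.tsum_sub hg.2.1 hf.2.1, Summable.tsum_sub hg.2.2 hf.2.2]
      ring
    linarith [hlin ▸ h0]
end

section
/- (Cauchy–Schwarz's inequality) Let f, g : ℝ → ℝ, α > 0, β > 0, and a, b ∈ ℝ with a < b, b ∈ A := {a + kα : k ∈ ℕ₀} and a ∈ B := {b − kβ : k ∈ ℕ₀}. If |f| and |g| are α,β-symmetric integrable on [a,b], then |f·g|, |f|² and |g|² are α,β-symmetric integrable on [a,b] and ∫_a^b |f(t)·g(t)| d_{α,β}t ≤ √((∫_a^b |f(t)|² d_{α,β}t) · (∫_a^b |g(t)|² d_{α,β}t)). -/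
/-
When `b` lies on the forward grid of `a` and `a` on the backward grid of `b`, the two tails of each
defining series cancel, so the symmetric integral is a finite sum of values of the integrand at grid
points with the nonnegative weights `α² / (α + β)` and `β² / (α + β)`. The inequality is then the
weighted Cauchy–Schwarz inequality for finite sums.
-/

open Finset

lemma Summable.mul_pointwise_of_nonneg {ι : Type*} {u v : ι → ℝ} (hu : Summable u)
    (hv : Summable v) (hu0 : 0 ≤ u) (hv0 : 0 ≤ v) : Summable (u * v) :=
  Summable.of_nonneg_of_le (fun k => mul_nonneg (hu0 k) (hv0 k))
    (fun k => mul_le_mul_of_nonneg_right (hu.le_tsum k fun j _ => hu0 j) (hv0 k))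
    (hv.mul_left (∑' k, u k))

section SymmetricIntegral

variable {α β a b : ℝ} {φ ψ : ℝ → ℝ}

lemma SymIntegrable.mul_of_nonneg (hφ : SymIntegrable α β φ a b) (hψ : SymIntegrable α β ψ a b)
    (hφ0 : 0 ≤ φ) (hψ0 : 0 ≤ ψ) : SymIntegrable α β (fun t => φ t * ψ t) a b := by
  have h (x : ℕ → ℝ) (hφx : Summable (φ ∘ x)) (hψx : Summable (ψ ∘ x)) :
      Summable ((φ * ψ) ∘ x) :=
    hφx.mul_pointwise_of_nonneg hψx (fun _ => hφ0 _) (fun _ => hψ0 _)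
  exact ⟨⟨h _ hφ.1.1 hψ.1.1, h _ hφ.1.2 hψ.1.2⟩, ⟨h _ hφ.2.1 hψ.2.1, h _ hφ.2.2 hψ.2.2⟩⟩

lemma deltaInt_eq_sum_range {n : ℕ} (hb : b = a + n * α)
    (hφ : Summable fun k : ℕ => φ (a + k * α)) :
    deltaInt α φ a b = α * ∑ k ∈ range n, φ (a + k * α) := by
  have htail : (fun k : ℕ => φ (b + k * α)) = fun k : ℕ => φ (a + (↑(k + n) : ℝ) * α) := by
    funext k; rw [hb]; push_cast; ring_nf
  rw [deltaInt, htail, ← hφ.sum_add_tsum_nat_add n]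
  ring

lemma nablaInt_eq_sum_range {m : ℕ} (ha : a = b - m * β)
    (hφ : Summable fun k : ℕ => φ (b - k * β)) :
    nablaInt β φ a b = β * ∑ k ∈ range m, φ (b - k * β) := by
  have htail : (fun k : ℕ => φ (a - k * β)) = fun k : ℕ => φ (b - (↑(k + m) : ℝ) * β) := by
    funext k; rw [ha]; push_cast; ring_nf
  rw [nablaInt, htail, ← hφ.sum_add_tsum_nat_add m]
  ring

/-- Grid points: `inl k` is the forward point `a + kα`, `inr k` the backward point `b − kβ`. -/
def symNode (α β a b : ℝ) : ℕ ⊕ ℕ → ℝ :=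
  Sum.elim (fun k => a + k * α) (fun k => b - k * β)

noncomputable def symWeight (α β : ℝ) : ℕ ⊕ ℕ → ℝ :=
  Sum.elim (fun _ => α ^ 2 / (α + β)) (fun _ => β ^ 2 / (α + β))

lemma symWeight_nonneg (hαβ : 0 ≤ α + β) (i : ℕ ⊕ ℕ) : 0 ≤ symWeight α β i := by
  cases i <;> exact div_nonneg (sq_nonneg _) hαβ

lemma symInt_eq_sum_disjSum {n m : ℕ} (hb : b = a + n * α) (ha : a = b - m * β)
    (hφ : SymIntegrable α β φ a b) :
    symInt α β φ a b =
      ∑ i ∈ (range n).disjSum (range m), symWeight α β i * φ (symNode α β a b i) := by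
  rw [symInt, deltaInt_eq_sum_range hb hφ.1.1, nablaInt_eq_sum_range ha hφ.2.2, sum_disjSum]
  simp only [symWeight, symNode, Sum.elim_inl, Sum.elim_inr, ← mul_sum]
  ring

end SymmetricIntegral

lemma Finset.sum_mul_mul_le_sqrt_mul {ι : Type*} (s : Finset ι) {w : ι → ℝ}
    (hw : ∀ i ∈ s, 0 ≤ w i) (x y : ι → ℝ) :
    ∑ i ∈ s, w i * (x i * y i) ≤
      √((∑ i ∈ s, w i * x i ^ 2) * ∑ i ∈ s, w i * y i ^ 2) :=
  Real.le_sqrt_of_sq_le <| sum_sq_le_sum_mul_sum_of_sq_le_mul s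
    (fun i hi => mul_nonneg (hw i hi) (sq_nonneg _))
    (fun i hi => mul_nonneg (hw i hi) (sq_nonneg _)) (fun i _ => le_of_eq (by ring))

theorem sym_cauchy_schwarz_inequality_general (f g : ℝ → ℝ) (α β : ℝ) (hα : 0 < α) (hβ : 0 < β)
    (a b : ℝ) (hbA : ∃ k : ℕ, b = a + k * α) (haB : ∃ k : ℕ, a = b - k * β)
    (hf : SymIntegrable α β (fun t => |f t|) a b)
    (hg : SymIntegrable α β (fun t => |g t|) a b) :
    SymIntegrable α β (fun t => |f t * g t|) a b ∧
    SymIntegrable α β (fun t => |f t| ^ 2) a b ∧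
    SymIntegrable α β (fun t => |g t| ^ 2) a b ∧
    symInt α β (fun t => |f t * g t|) a b ≤
      Real.sqrt ((symInt α β (fun t => |f t| ^ 2) a b) *
        (symInt α β (fun t => |g t| ^ 2) a b)) := by
  obtain ⟨n, hb⟩ := hbA
  obtain ⟨m, ha⟩ := haB
  have habs (φ : ℝ → ℝ) : 0 ≤ fun t => |φ t| := fun t => abs_nonneg _
  have hfg : SymIntegrable α β (fun t => |f t| * |g t|) a b :=
    hf.mul_of_nonneg hg (habs f) (habs g)
  have hff : SymIntegrable α β (fun t => |f t| ^ 2) a b := by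
    simpa only [sq] using hf.mul_of_nonneg hf (habs f) (habs f)
  have hgg : SymIntegrable α β (fun t => |g t| ^ 2) a b := by
    simpa only [sq] using hg.mul_of_nonneg hg (habs g) (habs g)
  simp only [abs_mul]
  refine ⟨hfg, hff, hgg, ?_⟩
  rw [symInt_eq_sum_disjSum hb ha hfg, symInt_eq_sum_disjSum hb ha hff,
    symInt_eq_sum_disjSum hb ha hgg]
  exact sum_mul_mul_le_sqrt_mul _ (fun i _ => symWeight_nonneg (add_pos hα hβ).le i) _ _

theorem sym_cauchy_schwarz_inequality (f g : ℝ → ℝ) (α β : ℝ) (hα : 0 < α) (hβ : 0 < β)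
    (a b : ℝ) (hab : a < b) (hbA : ∃ k : ℕ, b = a + k * α) (haB : ∃ k : ℕ, a = b - k * β)
    (hf : SymIntegrable α β (fun t => |f t|) a b)
    (hg : SymIntegrable α β (fun t => |g t|) a b) :
    SymIntegrable α β (fun t => |f t * g t|) a b ∧
    SymIntegrable α β (fun t => |f t| ^ 2) a b ∧
    SymIntegrable α β (fun t => |g t| ^ 2) a b ∧
    symInt α β (fun t => |f t * g t|) a b ≤
      Real.sqrt ((symInt α β (fun t => |f t| ^ 2) a b) *
        (symInt α β (fun t => |g t| ^ 2) a b)) :=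
  sym_cauchy_schwarz_inequality_general f g α β hα hβ a b hbA haB hf hg
end
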